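/- arXiv:1203.5307 — 5 statements merged into one kernel-verified Lean document; each statement's English description precedes it below -/
import Mathlib

section
/- Let f : ℝ → ℝ be smooth and let u : ℝ → ℝ be a nonconstant twice differentiable function satisfying u''(t) + f(u(t)) = 0 for all t ∈ ℝ and u'(t) ≠ 0 for all t ∈ ℝ. Let h be the antiderivative of f with h(u(0)) = −u'(0)²/2 (so that u'(t)² = −2h(u(t)) for all t). If b := sup_{t ∈ ℝ} u(t) is finite, then h(b) = 0; similarly, if a := inf_{t ∈ ℝ} u(t) is finite, then h(a) = 0. -/
open Filter Topology

/-- MVT-based key lemma: if `u'² = -2 h(u)` and `u → b` at infinity, then `h b = 0`. -/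
lemma aux_top (u h : ℝ → ℝ) (hu : Differentiable ℝ u) (hcont : Continuous h)
    (energy : ∀ t, (deriv u t) ^ 2 = -2 * h (u t)) (b : ℝ)
    (hb : Tendsto u atTop (𝓝 b)) : h b = 0 := by
  have hmvt : ∀ n : ℕ, ∃ c ∈ Set.Ioo (n : ℝ) (n + 1), deriv u c = u (n + 1) - u n := by
    intro n
    obtain ⟨c, hc, hc'⟩ := exists_hasDerivAt_eq_slope u (deriv u)
      (by linarith : (n : ℝ) < n + 1) hu.continuous.continuousOn
      (fun x _ => (hu x).hasDerivAt)
    refine ⟨c, hc, ?_⟩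
    rw [hc']
    field_simp
    ring
  choose c hc1 hc2 using hmvt
  have hctop : Tendsto c atTop atTop :=
    tendsto_atTop_mono (fun n => (hc1 n).1.le) tendsto_natCast_atTop_atTop
  have h1 : Tendsto (fun n : ℕ => deriv u (c n)) atTop (𝓝 0) := by
    have h1' : Tendsto (fun n : ℕ => u ((n : ℝ) + 1) - u n) atTop (𝓝 (b - b)) :=
      (hb.comp (tendsto_atTop_add_const_right _ 1 tendsto_natCast_atTop_atTop)).sub
        (hb.comp tendsto_natCast_atTop_atTop)
    simpa only [hc2, sub_self] using h1'
  have h2 : Tendsto (fun n : ℕ => (deriv u (c n)) ^ 2) atTop (𝓝 0) := by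
    simpa using h1.pow 2
  have h3 : Tendsto (fun n : ℕ => -2 * h (u (c n))) atTop (𝓝 (-2 * h b)) :=
    ((hcont.tendsto b).comp (hb.comp hctop)).const_mul (-2)
  have := tendsto_nhds_unique (by simpa only [energy] using h2) h3
  linarith

/-- Let `u` be a nonconstant twice differentiable global solution of
`u'' + f(u) = 0` with `u' ≠ 0` everywhere, and let `h` be the antiderivative of `f`
with `h(u(0)) = −u'(0)²/2` (so that `u'² = −2h(u)` by the energy identity). If the
supremum `b` of `u` is finite then `h(b) = 0`, and if the infimum `a` of `u` is
finite then `h(a) = 0`. -/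
theorem obata_ode_endpoints_of_image_are_zeros_of_h
    (f u : ℝ → ℝ) (hf : ContDiff ℝ (⊤ : ℕ∞) f)
    (hu : Differentiable ℝ u) (hu' : Differentiable ℝ (deriv u))
    (hode : ∀ t : ℝ, deriv (deriv u) t + f (u t) = 0)
    (hnc : ∃ s t : ℝ, u s ≠ u t)
    (hnocrit : ∀ t : ℝ, deriv u t ≠ 0)
    (h : ℝ → ℝ) (hh : ∀ s : ℝ, HasDerivAt h (f s) s)
    (hh0 : h (u 0) = -(deriv u 0) ^ 2 / 2) :
    (BddAbove (Set.range u) → h (sSup (Set.range u)) = 0) ∧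
    (BddBelow (Set.range u) → h (sInf (Set.range u)) = 0) := by
  -- continuity of h
  have hcont : Continuous h := by
    have : Differentiable ℝ h := fun s => (hh s).differentiableAt
    exact this.continuous
  -- energy identity
  set E : ℝ → ℝ := fun t => (deriv u t) ^ 2 / 2 + h (u t) with hE
  have hEderiv : ∀ t, HasDerivAt E 0 t := by
    intro t
    have d1 : HasDerivAt (fun t => (deriv u t) ^ 2 / 2)
        (deriv u t * deriv (deriv u) t) t := by
      have : HasDerivAt (fun t => (deriv u t) ^ 2 / 2) (((2 : ℕ) : ℝ) * deriv u t ^ (2 - 1) * deriv (deriv u) t / 2) t := ((hu' t).hasDerivAt.pow 2).div_const 2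
      convert this using 1
      push_cast
      ring
    have d2 : HasDerivAt (fun t => h (u t)) (f (u t) * deriv u t) t :=
      (hh (u t)).comp t (hu t).hasDerivAt
    have := d1.add d2
    have hz : deriv u t * deriv (deriv u) t + f (u t) * deriv u t = 0 := by
      have h0 := hode t
      have hfu : f (u t) = -deriv (deriv u) t := by linarith
      rw [hfu]; ring
    rwa [hz] at this
  have hEconst : ∀ t, E t = E 0 := by
    intro t
    have : ∀ x y : ℝ, E x = E y :=
      is_const_of_deriv_eq_zero (fun x => (hEderiv x).differentiableAt)
        (fun x => (hEderiv x).deriv)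
    exact this t 0
  have energy : ∀ t, (deriv u t) ^ 2 = -2 * h (u t) := by
    intro t
    have h1 := hEconst t
    simp only [hE] at h1
    rw [hh0] at h1
    linarith
  -- deriv u has constant sign
  have hderivcont : Continuous (deriv u) := hu'.continuous
  have hsign : (∀ t, 0 < deriv u t) ∨ (∀ t, deriv u t < 0) := by
    by_contra hcon
    push_neg at hcon
    obtain ⟨⟨s, hs⟩, ⟨t, ht⟩⟩ := hcon
    have hs' : deriv u s < 0 := lt_of_le_of_ne hs (hnocrit s)
    have ht' : 0 < deriv u t := ht.lt_of_ne (Ne.symm (hnocrit t))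
    have : (0 : ℝ) ∈ Set.uIcc (deriv u s) (deriv u t) :=
      Set.mem_uIcc.2 (Or.inl ⟨hs'.le, ht'.le⟩)
    obtain ⟨c, _, hc⟩ := intermediate_value_uIcc (hderivcont.continuousOn (s := Set.uIcc s t)) this
    exact hnocrit c hc
  constructor
  · intro hbb
    have hrange : (Set.range u).Nonempty := ⟨u 0, Set.mem_range_self 0⟩
    have hsup : sSup (Set.range u) = ⨆ t, u t := rfl
    rcases hsign with hpos | hneg
    · have hmono : Monotone u := by
        have : StrictMono u := strictMono_of_deriv_pos hpos
        exact this.monotone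
      have htend : Tendsto u atTop (𝓝 (⨆ t, u t)) := tendsto_atTop_ciSup hmono hbb
      rw [hsup]
      exact aux_top u h hu hcont energy _ htend
    · have hanti : Antitone u := by
        have : StrictAnti u := strictAnti_of_deriv_neg hneg
        exact this.antitone
      have htend : Tendsto u atBot (𝓝 (⨆ t, u t)) := tendsto_atBot_ciSup hanti hbb
      -- reflect: v t = u (-t)
      set v : ℝ → ℝ := fun t => u (-t) with hv
      have hvdiff : Differentiable ℝ v := hu.comp (differentiable_neg)
      have hvderiv : ∀ t, deriv v t = -deriv u (-t) := by
        intro t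
        simp only [hv]
        rw [deriv_comp_neg]
      have venergy : ∀ t, (deriv v t) ^ 2 = -2 * h (v t) := by
        intro t
        rw [hvderiv t]
        simpa using energy (-t)
      have hvtend : Tendsto v atTop (𝓝 (⨆ t, u t)) :=
        htend.comp tendsto_neg_atTop_atBot
      rw [hsup]
      exact aux_top v h hvdiff hcont venergy _ hvtend
  · intro hbb
    have hinf : sInf (Set.range u) = ⨅ t, u t := rfl
    rcases hsign with hpos | hneg
    · have hmono : Monotone u := (strictMono_of_deriv_pos hpos).monotone
      have htend : Tendsto u atBot (𝓝 (⨅ t, u t)) := tendsto_atBot_ciInf hmono hbb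
      set v : ℝ → ℝ := fun t => u (-t) with hv
      have hvdiff : Differentiable ℝ v := hu.comp (differentiable_neg)
      have hvderiv : ∀ t, deriv v t = -deriv u (-t) := by
        intro t
        simp only [hv]
        rw [deriv_comp_neg]
      have venergy : ∀ t, (deriv v t) ^ 2 = -2 * h (v t) := by
        intro t
        rw [hvderiv t]
        simpa using energy (-t)
      have hvtend : Tendsto v atTop (𝓝 (⨅ t, u t)) :=
        htend.comp tendsto_neg_atTop_atBot
      rw [hinf]
      exact aux_top v h hvdiff hcont venergy _ hvtend
    · have hanti : Antitone u := (strictAnti_of_deriv_neg hneg).antitone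
      have htend : Tendsto u atTop (𝓝 (⨅ t, u t)) := tendsto_atTop_ciInf hanti hbb
      rw [hinf]
      exact aux_top u h hu hcont energy _ htend
end

section
/- Let f : ℝ → ℝ be smooth and let u : ℝ → ℝ be twice differentiable with u''(t) + f(u(t)) = 0 and u'(t) > 0 for all t ∈ ℝ. Let h be the antiderivative of f with h(u(0)) = −u'(0)²/2 (so that u'(t)² = −2h(u(t)) for all t), let c = u(0) and b = sup_{t ∈ ℝ} u(t) ∈ (c, ∞]. Then ∫_c^b (−2h(s))^{−1/2} ds = ∞, and likewise ∫_a^c (−2h(s))^{−1/2} ds = ∞ where a = inf_{t ∈ ℝ} u(t) ∈ [−∞, c). -/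
open MeasureTheory

lemma traverse_time (u h : ℝ → ℝ) (hu : Differentiable ℝ u)
    (hpos : ∀ t, 0 < deriv u t)
    (energy : ∀ t, (deriv u t) ^ 2 = -2 * h (u t))
    (S : Set ℝ) (hS : MeasurableSet S) :
    ∫⁻ s in u '' S, ENNReal.ofReal (1 / Real.sqrt (-2 * h s)) = volume S := by
  have hinj : Function.Injective u := (StrictMono.injective (strictMono_of_deriv_pos hpos))
  have := lintegral_image_eq_lintegral_abs_det_fderiv_mul volume hS
    (f := u) (f' := fun x => (1 : ℝ →L[ℝ] ℝ).smulRight (deriv u x))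
    (fun x _ => ((hu x).hasDerivAt.hasFDerivAt).hasFDerivWithinAt)
    (hinj.injOn) (fun s => ENNReal.ofReal (1 / Real.sqrt (-2 * h s)))
  simp only [ContinuousLinearMap.smulRight_one_eq_toSpanSingleton, ContinuousLinearMap.det_toSpanSingleton] at this
  rw [this]
  rw [setLIntegral_congr_fun hS (g := fun _ => (1:ENNReal))
    (fun t _ => ?_), setLIntegral_one]
  have h1 : Real.sqrt (-2 * h (u t)) = deriv u t := by
    rw [← energy t, Real.sqrt_sq (hpos t).le]
  rw [h1, abs_of_pos (hpos t), ← ENNReal.ofReal_mul (hpos t).le,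
    mul_one_div, div_self (hpos t).ne', ENNReal.ofReal_one]

lemma image_Ioi_eq (u : ℝ → ℝ) (hc : Continuous u) (hm : StrictMono u) :
    u '' Set.Ioi 0 = {y | u 0 < y ∧ ∃ t, y < u t} := by
  ext y
  constructor
  · rintro ⟨t, ht, rfl⟩
    exact ⟨hm ht, ⟨t + 1, hm (by linarith)⟩⟩
  · rintro ⟨h1, T, hT⟩
    have h0T : (0:ℝ) ≤ T := le_of_lt (hm.lt_iff_lt.mp (h1.trans hT))
    have := intermediate_value_Ioo h0T hc.continuousOn (f := u)
    obtain ⟨t, ht, rfl⟩ := this ⟨h1, hT⟩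
    exact ⟨t, ht.1, rfl⟩

lemma image_Iio_eq (u : ℝ → ℝ) (hc : Continuous u) (hm : StrictMono u) :
    u '' Set.Iio 0 = {y | y < u 0 ∧ ∃ t, u t < y} := by
  ext y
  constructor
  · rintro ⟨t, ht, rfl⟩
    exact ⟨hm ht, ⟨t - 1, hm (by linarith)⟩⟩
  · rintro ⟨h1, T, hT⟩
    have h0T : T ≤ (0:ℝ) := le_of_lt (hm.lt_iff_lt.mp (hT.trans h1))
    have := intermediate_value_Ioo h0T hc.continuousOn (f := u)
    obtain ⟨t, ht, rfl⟩ := this ⟨hT, h1⟩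
    exact ⟨t, ht.2, rfl⟩

/-- Let `u` be a twice differentiable global solution of
`u'' + f(u) = 0` with `u' > 0` everywhere, and let `h` be the antiderivative of `f`
with `h(u(0)) = −u'(0)²/2` (so that `u'² = −2h(u)`). With `c = u(0)`,
`b = sup u ∈ (c, ∞]` and `a = inf u ∈ [−∞, c)`, the traversal-time integrals diverge:
`∫_c^b (−2h(s))^{−1/2} ds = ∞` and `∫_a^c (−2h(s))^{−1/2} ds = ∞`
(each case split according to whether the endpoint is finite or infinite). -/
theorem obata_ode_traversal_time_integrals_diverge
    (f u : ℝ → ℝ) (hf : ContDiff ℝ (⊤ : ℕ∞) f)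
    (hu : Differentiable ℝ u) (hu' : Differentiable ℝ (deriv u))
    (hode : ∀ t : ℝ, deriv (deriv u) t + f (u t) = 0)
    (hpos : ∀ t : ℝ, 0 < deriv u t)
    (h : ℝ → ℝ) (hh : ∀ s : ℝ, HasDerivAt h (f s) s)
    (hh0 : h (u 0) = -(deriv u 0) ^ 2 / 2) :
    ((∀ b : ℝ, IsLUB (Set.range u) b →
        ∫⁻ s in Set.Ioo (u 0) b, ENNReal.ofReal (1 / Real.sqrt (-2 * h s)) = ⊤) ∧
      (¬ BddAbove (Set.range u) →
        ∫⁻ s in Set.Ioi (u 0), ENNReal.ofReal (1 / Real.sqrt (-2 * h s)) = ⊤)) ∧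
    ((∀ a : ℝ, IsGLB (Set.range u) a →
        ∫⁻ s in Set.Ioo a (u 0), ENNReal.ofReal (1 / Real.sqrt (-2 * h s)) = ⊤) ∧
      (¬ BddBelow (Set.range u) →
        ∫⁻ s in Set.Iio (u 0), ENNReal.ofReal (1 / Real.sqrt (-2 * h s)) = ⊤)) := by
  -- Energy identity
  set E : ℝ → ℝ := fun t => (deriv u t) ^ 2 + 2 * h (u t) with hE
  have hEd : ∀ t, HasDerivAt E
      (2 * deriv u t * deriv (deriv u) t + 2 * (f (u t) * deriv u t)) t := by
    intro t
    have h1 : HasDerivAt (fun t => (deriv u t) ^ 2)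
        ((2 : ℕ) * deriv u t ^ 1 * deriv (deriv u) t) t := (hu' t).hasDerivAt.pow 2
    have h2 : HasDerivAt (fun t => h (u t)) (f (u t) * deriv u t) t :=
      (hh (u t)).comp t (hu t).hasDerivAt
    have := h1.add (h2.const_mul 2)
    refine this.congr_deriv ?_
    push_cast
    ring
  have hEzero : ∀ t, deriv E t = 0 := by
    intro t
    have hd : deriv (deriv u) t = - f (u t) := by linarith [hode t]
    rw [(hEd t).deriv, hd]
    ring
  have hEdiff : Differentiable ℝ E := fun t => (hEd t).differentiableAt
  have energy : ∀ t, (deriv u t) ^ 2 = -2 * h (u t) := by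
    intro t
    have h1 : E t = E 0 := is_const_of_deriv_eq_zero hEdiff hEzero t 0
    simp only [hE] at h1
    rw [hh0] at h1
    linarith
  have hm : StrictMono u := strictMono_of_deriv_pos hpos
  have hc : Continuous u := hu.continuous
  have key : ∀ S : Set ℝ, MeasurableSet S →
      ∫⁻ s in u '' S, ENNReal.ofReal (1 / Real.sqrt (-2 * h s)) = volume S :=
    fun S hS => traverse_time u h hu hpos energy S hS
  refine ⟨⟨?_, ?_⟩, ?_, ?_⟩
  · intro b hb
    have himg : u '' Set.Ioi 0 = Set.Ioo (u 0) b := by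
      rw [image_Ioi_eq u hc hm]
      ext y
      simp only [Set.mem_setOf_eq, Set.mem_Ioo]
      constructor
      · rintro ⟨h1, t, ht⟩
        exact ⟨h1, lt_of_lt_of_le ht (hb.1 ⟨t, rfl⟩)⟩
      · rintro ⟨h1, h2⟩
        refine ⟨h1, ?_⟩
        by_contra hcon
        push_neg at hcon
        exact absurd (hb.2 (fun x ⟨t, ht⟩ => ht ▸ hcon t)) (not_le.mpr h2)
    rw [← himg, key _ measurableSet_Ioi, Real.volume_Ioi]
  · intro hnb
    have himg : u '' Set.Ioi 0 = Set.Ioi (u 0) := by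
      rw [image_Ioi_eq u hc hm]
      ext y
      simp only [Set.mem_setOf_eq, Set.mem_Ioi]
      refine ⟨fun ⟨h1, _⟩ => h1, fun h1 => ⟨h1, ?_⟩⟩
      by_contra hcon
      push_neg at hcon
      exact hnb ⟨y, fun x ⟨t, ht⟩ => ht ▸ hcon t⟩
    rw [← himg, key _ measurableSet_Ioi, Real.volume_Ioi]
  · intro a ha
    have himg : u '' Set.Iio 0 = Set.Ioo a (u 0) := by
      rw [image_Iio_eq u hc hm]
      ext y
      simp only [Set.mem_setOf_eq, Set.mem_Ioo]
      constructor
      · rintro ⟨h1, t, ht⟩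
        exact ⟨lt_of_le_of_lt (ha.1 ⟨t, rfl⟩) ht, h1⟩
      · rintro ⟨h2, h1⟩
        refine ⟨h1, ?_⟩
        by_contra hcon
        push_neg at hcon
        exact absurd (ha.2 (fun x ⟨t, ht⟩ => ht ▸ hcon t)) (not_le.mpr h2)
    rw [← himg, key _ measurableSet_Iio, Real.volume_Iio]
  · intro hnb
    have himg : u '' Set.Iio 0 = Set.Iio (u 0) := by
      rw [image_Iio_eq u hc hm]
      ext y
      simp only [Set.mem_setOf_eq, Set.mem_Iio]
      refine ⟨fun ⟨h1, _⟩ => h1, fun h1 => ⟨h1, ?_⟩⟩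
      by_contra hcon
      push_neg at hcon
      exact hnb ⟨y, fun x ⟨t, ht⟩ => ht ▸ hcon t⟩
    rw [← himg, key _ measurableSet_Iio, Real.volume_Iio]
end

section
/- Let f : ℝ → ℝ be smooth, μ ∈ ℝ with f(μ) ≠ 0, and let u be a solution of u'' + f(u) = 0 on [0, T) with u(0) = μ, u'(0) = 0, and u'(t) ≠ 0 for all t ∈ (0, T). Let φ : [0, T) → ℝ be differentiable with φ(0) = 0, φ'(0) = 1, and u'(t)φ'(t) + f(u(t))φ(t) = 0 for all t ∈ (0, T). Then φ(t) = −u'(t)/f(μ) for all t ∈ [0, T). -/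
/-- Jacobi field ODE. Let `u` solve `u'' + f(u) = 0` on `[0, T)` with
`u(0) = μ`, `u'(0) = 0`, `f(μ) ≠ 0` and `u' ≠ 0` on `(0, T)`. If `φ` is differentiable
on `[0, T)` with `φ(0) = 0`, `φ'(0) = 1` and `u'φ' + f(u)φ = 0` on `(0, T)`, then
`φ(t) = −u'(t)/f(μ)` on `[0, T)`. -/
theorem obata_ode_jacobi_field_formula
    (f : ℝ → ℝ) (hf : ContDiff ℝ (⊤ : ℕ∞) f) (μ T : ℝ) (hT : 0 < T) (hfμ : f μ ≠ 0)
    (u u' u'' : ℝ → ℝ)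
    (hu : ∀ t ∈ Set.Ico 0 T, HasDerivWithinAt u (u' t) (Set.Ico 0 T) t)
    (hu' : ∀ t ∈ Set.Ico 0 T, HasDerivWithinAt u' (u'' t) (Set.Ico 0 T) t)
    (hode : ∀ t ∈ Set.Ico 0 T, u'' t + f (u t) = 0)
    (hinit : u 0 = μ) (hinit' : u' 0 = 0)
    (hne : ∀ t ∈ Set.Ioo 0 T, u' t ≠ 0)
    (φ φ' : ℝ → ℝ)
    (hφ : ∀ t ∈ Set.Ico 0 T, HasDerivWithinAt φ (φ' t) (Set.Ico 0 T) t)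
    (hφ0 : φ 0 = 0) (hφ'0 : φ' 0 = 1)
    (hφode : ∀ t ∈ Set.Ioo 0 T, u' t * φ' t + f (u t) * φ t = 0) :
    ∀ t ∈ Set.Ico 0 T, φ t = -(u' t) / f μ := by
  have hsub : Set.Ioo (0:ℝ) T ⊆ Set.Ico 0 T := Set.Ioo_subset_Ico_self
  set q : ℝ → ℝ := fun t => φ t / u' t with hq
  -- q has zero derivative on Ioo 0 T
  have hqd : ∀ t ∈ Set.Ioo 0 T, HasDerivWithinAt q 0 (Set.Ioo 0 T) t := by
    intro t ht
    have h1 : HasDerivWithinAt φ (φ' t) (Set.Ioo 0 T) t :=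
      (hφ t (hsub ht)).mono hsub
    have h2 : HasDerivWithinAt u' (u'' t) (Set.Ioo 0 T) t :=
      (hu' t (hsub ht)).mono hsub
    have hd := h1.div h2 (hne t ht)
    have hu''t : u'' t = -f (u t) := by
      have := hode t (hsub ht); linarith
    have hnum : φ' t * u' t - φ t * u'' t = 0 := by
      have := hφode t ht
      rw [hu''t]; ring_nf; linarith
    rw [hnum] at hd
    rw [zero_div] at hd; exact hd
  -- q is constant on Ioo 0 T
  set c : ℝ := q (T / 2) with hc
  have hTmem : T / 2 ∈ Set.Ioo (0:ℝ) T := ⟨by linarith, by linarith⟩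
  have hconst : ∀ t ∈ Set.Ioo 0 T, q t = c := by
    intro t ht
    refine (convex_Ioo (0:ℝ) T).is_const_of_fderivWithin_eq_zero
      (fun s hs => ((hqd s hs).differentiableWithinAt)) ?_ ht hTmem
    intro s hs
    have := (hqd s hs).hasFDerivWithinAt.fderivWithin (isOpen_Ioo.uniqueDiffWithinAt hs)
    rw [this]; ext x; simp
  -- hence φ = c * u' on Ico 0 T
  have heq : ∀ t ∈ Set.Ico 0 T, φ t = c * u' t := by
    intro t ht
    rcases eq_or_lt_of_le ht.1 with h0 | h0
    · rw [← h0, hφ0, hinit', mul_zero]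
    · have ht' : t ∈ Set.Ioo 0 T := ⟨h0, ht.2⟩
      have := hconst t ht'
      rw [hq] at this
      exact (div_eq_iff (hne t ht')).mp this
  -- compute c via derivative at 0
  have hφd0 : HasDerivWithinAt φ (c * u'' 0) (Set.Ico 0 T) 0 := by
    have h0 : (0:ℝ) ∈ Set.Ico 0 T := ⟨le_refl _, hT⟩
    have hv : HasDerivWithinAt (fun t => c * u' t) (c * u'' 0) (Set.Ico 0 T) 0 :=
      (hu' 0 h0).const_mul c
    exact hv.congr (fun s hs => heq s hs) (heq 0 h0)
  have h0 : (0:ℝ) ∈ Set.Ico 0 T := ⟨le_refl _, hT⟩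
  have huniq : φ' 0 = c * u'' 0 :=
    (uniqueDiffOn_Ico 0 T 0 h0).eq_deriv _ (hφ 0 h0) hφd0
  have hu''0 : u'' 0 = -f μ := by
    have := hode 0 h0; rw [hinit] at this; linarith
  have hcval : c = -1 / f μ := by
    rw [hu''0, hφ'0] at huniq
    field_simp at huniq ⊢
    linarith
  intro t ht
  rw [heq t ht, hcval]
  field_simp
end

section
/- Let f : ℝ → ℝ be smooth, let J ⊆ ℝ be an open interval, and let u : J → ℝ be a nonconstant twice differentiable function with u''(t) + f(u(t)) = 0 for all t ∈ J. If u'(t₀) = 0 for some t₀ ∈ J and μ := u(t₀), then f(μ) ≠ 0, and t₀ is a strict local extremum of u: a strict local maximum if f(μ) > 0 and a strict local minimum if f(μ) < 0. -/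
open Set Metric Filter

lemma aux_strict_max (J : Set ℝ) (hJopen : IsOpen J) (u u' : ℝ → ℝ)
    (hu : ∀ t ∈ J, HasDerivAt u (u' t) t) (t₀ : ℝ) (ht₀ : t₀ ∈ J)
    (hcrit : u' t₀ = 0) {c : ℝ} (hd : HasDerivAt u' c t₀) (hc : c < 0) :
    ∀ᶠ t in nhdsWithin t₀ {t₀}ᶜ, u t < u t₀ := by
  have hslope : Filter.Tendsto (slope u' t₀) (nhdsWithin t₀ {t₀}ᶜ) (nhds c) :=
    hasDerivAt_iff_tendsto_slope.mp hd
  have h1 : ∀ᶠ t in nhdsWithin t₀ {t₀}ᶜ, slope u' t₀ t < 0 :=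
    hslope (Iio_mem_nhds hc)
  have h2 : ∀ᶠ t in nhdsWithin t₀ {t₀}ᶜ, slope u' t₀ t < 0 ∧ t ∈ J :=
    h1.and (eventually_nhdsWithin_of_eventually_nhds (hJopen.eventually_mem ht₀))
  rw [eventually_nhdsWithin_iff] at h2
  rw [Metric.eventually_nhds_iff_ball] at h2
  obtain ⟨ε, hε, hball⟩ := h2
  rw [eventually_nhdsWithin_iff, Metric.eventually_nhds_iff_ball]
  refine ⟨ε, hε, fun t ht hne => ?_⟩
  have hne' : t ≠ t₀ := hne
  -- membership helpers
  have hsub : ball t₀ ε ⊆ J := fun s hs => by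
    by_cases h : s = t₀
    · exact h ▸ ht₀
    · exact (hball s hs h).2
  have hslope_neg : ∀ s ∈ ball t₀ ε, s ≠ t₀ → u' s / (s - t₀) < 0 := by
    intro s hs hsne
    have := (hball s hs hsne).1
    rwa [slope_def_field, hcrit, sub_zero, div_eq_inv_mul, ← div_eq_inv_mul] at this
  rcases lt_or_gt_of_ne hne' with hlt | hgt
  · -- t < t₀ : u strictly increasing on [t, t₀]
    have hIcc : Icc t t₀ ⊆ ball t₀ ε := by
      intro s hs
      rw [Real.ball_eq_Ioo]
      have htb := ht; rw [Real.ball_eq_Ioo] at htb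
      exact ⟨lt_of_lt_of_le htb.1 hs.1, lt_of_le_of_lt hs.2 (by linarith)⟩
    have hmono : StrictMonoOn u (Icc t t₀) := by
      apply strictMonoOn_of_deriv_pos (convex_Icc t t₀)
      · intro s hs
        exact (hu s (hsub (hIcc hs))).continuousAt.continuousWithinAt
      · intro s hs
        rw [interior_Icc] at hs
        have hsb : s ∈ ball t₀ ε := hIcc (Ioo_subset_Icc_self hs)
        have hsne : s ≠ t₀ := ne_of_lt hs.2
        have := hslope_neg s hsb hsne
        have hneg : s - t₀ < 0 := by linarith [hs.2]
        rw [(hu s (hsub hsb)).deriv]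
        by_contra hcon
        push_neg at hcon
        have : 0 ≤ u' s / (s - t₀) := div_nonneg_iff.mpr (Or.inr ⟨hcon, hneg.le⟩)
        linarith
    exact hmono (left_mem_Icc.2 hlt.le) (right_mem_Icc.2 hlt.le) hlt
  · -- t₀ < t : u strictly decreasing on [t₀, t]
    have hIcc : Icc t₀ t ⊆ ball t₀ ε := by
      intro s hs
      rw [Real.ball_eq_Ioo]
      have htb := ht; rw [Real.ball_eq_Ioo] at htb
      exact ⟨lt_of_lt_of_le (by linarith) hs.1, lt_of_le_of_lt hs.2 htb.2⟩
    have hanti : StrictAntiOn u (Icc t₀ t) := by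
      apply strictAntiOn_of_deriv_neg (convex_Icc t₀ t)
      · intro s hs
        exact (hu s (hsub (hIcc hs))).continuousAt.continuousWithinAt
      · intro s hs
        rw [interior_Icc] at hs
        have hsb : s ∈ ball t₀ ε := hIcc (Ioo_subset_Icc_self hs)
        have hsne : s ≠ t₀ := ne_of_gt hs.1
        have := hslope_neg s hsb hsne
        have hpos : 0 < s - t₀ := by linarith [hs.1]
        rw [(hu s (hsub hsb)).deriv]
        by_contra hcon
        push_neg at hcon
        have : 0 ≤ u' s / (s - t₀) := div_nonneg hcon hpos.le
        linarith
    exact hanti (left_mem_Icc.2 hgt.le) (right_mem_Icc.2 hgt.le) hgt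


lemma aux_unique (f : ℝ → ℝ) (hf : ContDiff ℝ (⊤ : ℕ∞) f)
    (J : Set ℝ) (hJopen : IsOpen J) (hJconn : J.OrdConnected)
    (u u' u'' : ℝ → ℝ)
    (hu : ∀ t ∈ J, HasDerivAt u (u' t) t)
    (hu' : ∀ t ∈ J, HasDerivAt u' (u'' t) t)
    (hode : ∀ t ∈ J, u'' t + f (u t) = 0)
    (t₀ : ℝ) (ht₀ : t₀ ∈ J) (hcrit : u' t₀ = 0) (μ : ℝ) (hμ : μ = u t₀)
    (hfμ : f μ = 0) (t₁ : ℝ) (ht₁ : t₁ ∈ J) : u t₁ = μ := by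
  -- find a, b with t₀, t₁ ∈ Ioo a b and Ioo a b ⊆ J
  set c := min t₀ t₁ with hc
  set d := max t₀ t₁ with hd
  have hcJ : c ∈ J := by rcases min_cases t₀ t₁ with ⟨h,_⟩|⟨h,_⟩ <;> rw [hc, h] <;> assumption
  have hdJ : d ∈ J := by rcases max_cases t₀ t₁ with ⟨h,_⟩|⟨h,_⟩ <;> rw [hd, h] <;> assumption
  obtain ⟨ε₁, hε₁, hball₁⟩ := Metric.isOpen_iff.mp hJopen c hcJ
  obtain ⟨ε₂, hε₂, hball₂⟩ := Metric.isOpen_iff.mp hJopen d hdJ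
  set a := c - ε₁ / 2 with ha
  set b := d + ε₂ / 2 with hb
  have haJ : a ∈ J := hball₁ (by simp [ha, Real.ball_eq_Ioo]; constructor <;> linarith)
  have hbJ : b ∈ J := hball₂ (by simp [hb, Real.ball_eq_Ioo]; constructor <;> linarith)
  have hIccJ : Icc a b ⊆ J := hJconn.out haJ hbJ
  have hcd : c ≤ d := min_le_max
  have hab : Icc c d ⊆ Ioo a b := fun s hs => ⟨by simp [ha] at *; linarith [hs.1], by simp [hb] at *; linarith [hs.2]⟩
  have hIoo : Ioo a b ⊆ J := fun s hs => hIccJ (Ioo_subset_Icc_self hs)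
  have ht₀m : t₀ ∈ Ioo a b := hab ⟨min_le_left _ _, le_max_left _ _⟩
  have ht₁m : t₁ ∈ Ioo a b := hab ⟨min_le_right _ _, le_max_right _ _⟩
  -- compact bound on u
  have hucont : ContinuousOn u (Icc a b) := fun s hs =>
    (hu s (hIccJ hs)).continuousAt.continuousWithinAt
  have hcomp : IsCompact (u '' Icc a b) := (isCompact_Icc).image_of_continuousOn hucont
  obtain ⟨r, hr⟩ := hcomp.isBounded.subset_closedBall 0
  set R : ℝ := max r |μ| with hR
  have hμR : μ ∈ closedBall (0:ℝ) R := by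
    simp [Real.dist_eq, hR]
  have huR : ∀ s ∈ Ioo a b, u s ∈ closedBall (0:ℝ) R := fun s hs =>
    closedBall_subset_closedBall (le_max_left _ _) (hr ⟨s, Ioo_subset_Icc_self hs, rfl⟩)
  -- Lipschitz constant for f on closedBall 0 R
  have hfd : Differentiable ℝ f := hf.differentiable (by simp)
  have hfderiv : Continuous (deriv f) := (hf.of_le (by simp) : ContDiff ℝ 1 f).continuous_deriv le_rfl
  obtain ⟨C, hC⟩ := (isCompact_closedBall (0:ℝ) R).exists_bound_of_continuousOn
    hfderiv.continuousOn
  set L : NNReal := ⟨max C 0, le_max_right _ _⟩ with hL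
  have hfLip : LipschitzOnWith L f (closedBall (0:ℝ) R) := by
    refine Convex.lipschitzOnWith_of_nnnorm_deriv_le (fun x _ => hfd x)
      (fun x hx => ?_) (convex_closedBall 0 R)
    have : ‖deriv f x‖ ≤ max C 0 := (hC x hx).trans (le_max_left _ _)
    exact_mod_cast this
  -- the 2D system
  set v : ℝ → ℝ × ℝ → ℝ × ℝ := fun _ p => (p.2, -f p.1) with hv
  set s : ℝ → Set (ℝ × ℝ) := fun _ => closedBall (0:ℝ) R ×ˢ univ with hs
  have hvLip : ∀ t, LipschitzOnWith (1 ⊔ L) (v t) (s t) := by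
    intro t
    rw [lipschitzOnWith_iff_dist_le_mul]
    intro p hp q hq
    rw [Prod.dist_eq, Prod.dist_eq]
    have h1 : dist p.2 q.2 ≤ max (dist p.1 q.1) (dist p.2 q.2) := le_max_right _ _
    have h2 : dist (-f p.1) (-f q.1) = dist (f p.1) (f q.1) := by
      rw [dist_neg_neg]
    have h3 : dist (f p.1) (f q.1) ≤ L * dist p.1 q.1 :=
      hfLip.dist_le_mul p.1 hp.1 q.1 hq.1
    have hK : ((1 ⊔ L : NNReal) : ℝ) = max 1 (L:ℝ) := rfl
    rw [hK]
    apply max_le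
    · calc dist p.2 q.2 ≤ max (dist p.1 q.1) (dist p.2 q.2) := h1
        _ ≤ max 1 (L:ℝ) * max (dist p.1 q.1) (dist p.2 q.2) := by
            nlinarith [le_max_left 1 (L:ℝ), dist_nonneg.trans h1]
    · rw [h2]
      calc dist (f p.1) (f q.1) ≤ L * dist p.1 q.1 := h3
        _ ≤ max 1 (L:ℝ) * max (dist p.1 q.1) (dist p.2 q.2) := by
            exact mul_le_mul (le_max_right 1 (L:ℝ)) (le_max_left _ _) dist_nonneg
              (le_trans zero_le_one (le_max_left _ _))
  set F : ℝ → ℝ × ℝ := fun t => (u t, u' t) with hF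
  set G : ℝ → ℝ × ℝ := fun _ => (μ, 0) with hG
  have heqon : EqOn F G (Ioo a b) := by
    apply ODE_solution_unique_of_mem_Ioo (fun t _ => hvLip t) ht₀m
    · intro t ht
      refine ⟨?_, ⟨huR t ht, mem_univ _⟩⟩
      have h1 := (hu t (hIoo ht)).prodMk (hu' t (hIoo ht))
      have h2 : v t (F t) = (u' t, u'' t) := by
        simp only [hv, hF]
        have := hode t (hIoo ht)
        have : -f (u t) = u'' t := by linarith
        rw [this]
      rw [h2]
      exact h1
    · intro t ht
      refine ⟨?_, ⟨hμR, mem_univ _⟩⟩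
      have h2 : v t (G t) = (0, 0) := by simp [hv, hG, hfμ]
      rw [h2]
      exact (hasDerivAt_const t (μ, (0:ℝ))).congr_deriv rfl
    · simp [hF, hG, hcrit, hμ]
  have := heqon ht₁m
  simpa [hF, hG] using congrArg Prod.fst this

/-- Gradient lemma, one-dimensional content. Let `u` be a nonconstant
solution of `u'' + f(u) = 0` on an open interval `J`. If `u'(t₀) = 0` for `t₀ ∈ J`
and `μ = u(t₀)`, then `f(μ) ≠ 0`, and `t₀` is a strict local extremum of `u`: a
strict local maximum if `f(μ) > 0` and a strict local minimum if `f(μ) < 0`. -/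
theorem obata_ode_critical_point_is_strict_local_extremum
    (f : ℝ → ℝ) (hf : ContDiff ℝ (⊤ : ℕ∞) f)
    (J : Set ℝ) (hJopen : IsOpen J) (hJconn : J.OrdConnected)
    (u u' u'' : ℝ → ℝ)
    (hu : ∀ t ∈ J, HasDerivAt u (u' t) t)
    (hu' : ∀ t ∈ J, HasDerivAt u' (u'' t) t)
    (hode : ∀ t ∈ J, u'' t + f (u t) = 0)
    (hnc : ∃ s ∈ J, ∃ t ∈ J, u s ≠ u t)
    (t₀ : ℝ) (ht₀ : t₀ ∈ J) (hcrit : u' t₀ = 0) (μ : ℝ) (hμ : μ = u t₀) :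
    f μ ≠ 0 ∧
    (0 < f μ → ∀ᶠ t in nhdsWithin t₀ {t₀}ᶜ, u t < u t₀) ∧
    (f μ < 0 → ∀ᶠ t in nhdsWithin t₀ {t₀}ᶜ, u t₀ < u t) := by
  have hu''t₀ : u'' t₀ = -f μ := by
    have := hode t₀ ht₀
    rw [hμ]; linarith
  refine ⟨?_, ?_, ?_⟩
  · intro hfμ
    obtain ⟨s₁, hs₁, t₁, ht₁, hne⟩ := hnc
    have h1 := aux_unique f hf J hJopen hJconn u u' u'' hu hu' hode t₀ ht₀ hcrit μ hμ hfμ s₁ hs₁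
    have h2 := aux_unique f hf J hJopen hJconn u u' u'' hu hu' hode t₀ ht₀ hcrit μ hμ hfμ t₁ ht₁
    exact hne (h1.trans h2.symm)
  · intro hpos
    exact aux_strict_max J hJopen u u' hu t₀ ht₀ hcrit (hu' t₀ ht₀)
      (by rw [hu''t₀]; linarith)
  · intro hneg
    have := aux_strict_max J hJopen (fun t => -u t) (fun t => -u' t)
      (fun t ht => (hu t ht).neg) t₀ ht₀ (by simp [hcrit])
      ((hu' t₀ ht₀).neg) (by rw [hu''t₀]; simpa using hneg)
    filter_upwards [this] with t ht
    simpa using ht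
end

section
/- Let f : ℝ → ℝ be smooth and nondegenerately coercive, and let u : ℝ → ℝ be a nonconstant twice differentiable function satisfying u''(t) + f(u(t)) = 0 for all t ∈ ℝ, with u'(0) = 0. Set μ = u(0) and h(s) = ∫_μ^s f(τ) dτ. Then there exist finite real numbers a ≤ μ ≤ b such that h(a) = h(b) = 0, h < 0 on (a, b), and u(ℝ) ⊆ [a, b]; moreover μ = a or μ = b. -/
/-- A smooth function `f : ℝ → ℝ` is *coercive* if: every antiderivative `h` of `f`
that is negative somewhere has a zero; whenever an antiderivative `h` of `f` satisfies
`h(μ) = h(ν) = 0` and `h < 0` on `(μ, ν)`, then `f(μ)` and `f(ν)` are not both zero;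
and whenever an antiderivative `h` of `f` has a zero `μ` with `h < 0` on `(μ, ∞)`
(so `μ` is the maximal zero), or a zero `μ` with `h < 0` on `(−∞, μ)` (so `μ` is the
minimal zero), then `f(μ) ≠ 0`. -/
def Coercive (f : ℝ → ℝ) : Prop :=
  ∀ h : ℝ → ℝ, (∀ s : ℝ, HasDerivAt h (f s) s) →
    ((∃ s : ℝ, h s < 0) → ∃ s : ℝ, h s = 0) ∧
    (∀ μ ν : ℝ, μ < ν → h μ = 0 → h ν = 0 → (∀ s ∈ Set.Ioo μ ν, h s < 0) →
      ¬(f μ = 0 ∧ f ν = 0)) ∧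
    (∀ μ : ℝ, h μ = 0 → (∀ s : ℝ, μ < s → h s < 0) → f μ ≠ 0) ∧
    (∀ μ : ℝ, h μ = 0 → (∀ s : ℝ, s < μ → h s < 0) → f μ ≠ 0)

/-- `f` is *degenerately coercive* if it is coercive and, whenever an antiderivative
`h` of `f` satisfies `h(μ) = h(ν) = 0` and `h < 0` on `(μ, ν)`, then `f(μ)·f(ν) = 0`. -/
def DegeneratelyCoercive (f : ℝ → ℝ) : Prop :=
  Coercive f ∧
    ∀ h : ℝ → ℝ, (∀ s : ℝ, HasDerivAt h (f s) s) →
      ∀ μ ν : ℝ, μ < ν → h μ = 0 → h ν = 0 → (∀ s ∈ Set.Ioo μ ν, h s < 0) →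
        f μ * f ν = 0

/-- `f` is *nondegenerately coercive* if for every antiderivative `h` of `f`, the set
`{s : h s < 0}` is a disjoint union of bounded open intervals whose endpoints are
zeros of `h` at which `f` does not vanish; equivalently, every point where `h < 0`
lies in a bounded open interval `(a, b)` with `h(a) = h(b) = 0`, `h < 0` on `(a, b)`,
`f(a) ≠ 0` and `f(b) ≠ 0`. -/
def NondegeneratelyCoercive (f : ℝ → ℝ) : Prop :=
  ∀ h : ℝ → ℝ, (∀ s : ℝ, HasDerivAt h (f s) s) →
    ∀ c : ℝ, h c < 0 → ∃ a b : ℝ, a < c ∧ c < b ∧ h a = 0 ∧ h b = 0 ∧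
      (∀ s ∈ Set.Ioo a b, h s < 0) ∧ f a ≠ 0 ∧ f b ≠ 0

lemma aux_right (f h : ℝ → ℝ) (hfc : Continuous f) (hd : ∀ s, HasDerivAt h (f s) s)
    (b : ℝ) (hb : 0 < f b) : ∃ ε > 0, ∀ s ∈ Set.Ioc b (b + ε), h b < h s := by
  obtain ⟨ε, hε, hball⟩ : ∃ ε > 0, Metric.ball b ε ⊆ {s | 0 < f s} :=
    Metric.mem_nhds_iff.mp ((isOpen_lt continuous_const hfc).mem_nhds hb)
  refine ⟨ε / 2, by linarith, fun s hs => ?_⟩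
  have hmono : StrictMonoOn h (Set.Icc b (b + ε / 2)) := by
    refine strictMonoOn_of_deriv_pos (convex_Icc _ _)
      (fun x _ => (hd x).continuousAt.continuousWithinAt) (fun x hx => ?_)
    rw [interior_Icc] at hx
    rw [(hd x).deriv]
    exact hball (by
      rw [Metric.mem_ball, Real.dist_eq, abs_lt]
      constructor <;> [linarith [hx.1]; linarith [hx.2]])
  exact hmono (Set.left_mem_Icc.mpr (by linarith)) ⟨le_of_lt hs.1, hs.2⟩ hs.1

lemma aux_left (f h : ℝ → ℝ) (hfc : Continuous f) (hd : ∀ s, HasDerivAt h (f s) s)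
    (a : ℝ) (ha : f a < 0) : ∃ ε > 0, ∀ s ∈ Set.Ico (a - ε) a, h a < h s := by
  obtain ⟨ε, hε, hball⟩ : ∃ ε > 0, Metric.ball a ε ⊆ {s | f s < 0} :=
    Metric.mem_nhds_iff.mp ((isOpen_lt hfc continuous_const).mem_nhds ha)
  refine ⟨ε / 2, by linarith, fun s hs => ?_⟩
  have hmono : StrictAntiOn h (Set.Icc (a - ε / 2) a) := by
    refine strictAntiOn_of_deriv_neg (convex_Icc _ _)
      (fun x _ => (hd x).continuousAt.continuousWithinAt) (fun x hx => ?_)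
    rw [interior_Icc] at hx
    rw [(hd x).deriv]
    exact hball (by
      rw [Metric.mem_ball, Real.dist_eq, abs_lt]
      constructor <;> [linarith [hx.1]; linarith [hx.2]])
  exact hmono ⟨hs.1, le_of_lt hs.2⟩ (Set.right_mem_Icc.mpr (by linarith)) hs.2


theorem obata_ode_nondegenerately_coercive_image_in_compact_interval
    (f u : ℝ → ℝ) (hf : ContDiff ℝ (⊤ : ℕ∞) f) (hfc : NondegeneratelyCoercive f)
    (hu : Differentiable ℝ u) (hu' : Differentiable ℝ (deriv u))
    (hode : ∀ t : ℝ, deriv (deriv u) t + f (u t) = 0)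
    (hnc : ∃ s t : ℝ, u s ≠ u t)
    (hcrit : deriv u 0 = 0) (μ : ℝ) (hμ : μ = u 0)
    (h : ℝ → ℝ) (hh : ∀ s : ℝ, h s = ∫ τ in μ..s, f τ) :
    ∃ a b : ℝ, a ≤ μ ∧ μ ≤ b ∧ h a = 0 ∧ h b = 0 ∧
      (∀ s ∈ Set.Ioo a b, h s < 0) ∧ (∀ t : ℝ, u t ∈ Set.Icc a b) ∧
      (μ = a ∨ μ = b) := by
  have hfcont : Continuous f := hf.continuous
  have hheq : h = fun s => ∫ τ in μ..s, f τ := funext hh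
  -- h is an antiderivative of f
  have hderiv : ∀ s : ℝ, HasDerivAt h (f s) s := by
    intro s
    rw [hheq]
    exact intervalIntegral.integral_hasDerivAt_right
      (hfcont.intervalIntegrable _ _)
      (hfcont.stronglyMeasurableAtFilter _ _)
      hfcont.continuousAt
  have hhμ : h μ = 0 := by rw [hh, intervalIntegral.integral_same]
  -- energy
  set E : ℝ → ℝ := fun t => (deriv u t) ^ 2 + 2 * h (u t) with hE
  have hEderiv : ∀ t : ℝ, HasDerivAt E 0 t := by
    intro t
    have h1 : HasDerivAt (fun t => (deriv u t) ^ 2)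
        (2 * deriv u t ^ 1 * deriv (deriv u) t) t := ((hu' t).hasDerivAt).pow 2
    have h2 : HasDerivAt (fun t => h (u t)) (f (u t) * deriv u t) t :=
      (hderiv (u t)).comp t (hu t).hasDerivAt
    have := h1.add (h2.const_mul 2)
    convert this using 1
    · rfl
    · rfl
    · rfl
    have h3 : deriv (deriv u) t = -f (u t) := by linarith [hode t]
    rw [h3]; ring
  have hEconst : ∀ t : ℝ, E t = E 0 :=
    fun t => is_const_of_deriv_eq_zero (fun x => (hEderiv x).differentiableAt)
      (fun x => (hEderiv x).deriv) t 0
  have hE0 : E 0 = 0 := by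
    simp only [hE, hcrit, ← hμ, hhμ]; ring
  have hkey : ∀ t : ℝ, (deriv u t) ^ 2 + 2 * h (u t) = 0 := by
    intro t; have := hEconst t; rw [hE0] at this; exact this
  have hle : ∀ t : ℝ, h (u t) ≤ 0 := fun t => by nlinarith [hkey t, sq_nonneg (deriv u t)]
  -- nonconstant gives a point with h(u t₀) < 0
  obtain ⟨t₀, ht₀⟩ : ∃ t₀ : ℝ, h (u t₀) < 0 := by
    by_contra hc
    push_neg at hc
    obtain ⟨s, t, hst⟩ := hnc
    have hz : ∀ t : ℝ, deriv u t = 0 := by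
      intro t
      have h0 : h (u t) = 0 := le_antisymm (hle t) (hc t)
      nlinarith [hkey t, sq_nonneg (deriv u t)]
    exact hst (is_const_of_deriv_eq_zero hu hz s t)
  obtain ⟨a, b, hac, hcb, ha0, hb0, hneg, hfa, hfb⟩ := hfc h hderiv (u t₀) ht₀
  have hab : a < b := lt_trans hac hcb
  -- sign of f at a and b
  have hfbpos : 0 < f b := by
    rcases lt_trichotomy (f b) 0 with hlt | heq | hgt
    · obtain ⟨ε, hε, hmono⟩ := aux_left f h hfcont hderiv b hlt
      set s := max a (b - ε) + (b - max a (b - ε)) / 2 with hs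
      have hs1 : max a (b - ε) < b := max_lt hab (by linarith)
      have hsa : a < s := by
        have := le_max_left a (b - ε); simp only [hs]; nlinarith
      have hsb : s < b := by simp only [hs]; linarith
      have hsε : b - ε ≤ max a (b - ε) := le_max_right _ _
      have := hmono s ⟨by simp only [hs]; linarith, hsb⟩
      have := hneg s ⟨hsa, hsb⟩
      rw [hb0] at *
      linarith
    · exact absurd heq hfb
    · exact hgt
  have hfaneg : f a < 0 := by
    rcases lt_trichotomy (f a) 0 with hlt | heq | hgt
    · exact hlt
    · exact absurd heq hfa
    · obtain ⟨ε, hε, hmono⟩ := aux_right f h hfcont hderiv a hgt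
      set s := a + (min b (a + ε) - a) / 2 with hs
      have hs1 : a < min b (a + ε) := lt_min hab (by linarith)
      have hsa : a < s := by simp only [hs]; linarith
      have hsb : s < b := by
        have := min_le_left b (a + ε); simp only [hs]; nlinarith
      have hsε : min b (a + ε) ≤ a + ε := min_le_right _ _
      have := hmono s ⟨hsa, by simp only [hs]; linarith⟩
      have := hneg s ⟨hsa, hsb⟩
      rw [ha0] at *
      linarith
  -- image of u lies in [a, b]
  have himg : ∀ t : ℝ, u t ∈ Set.Icc a b := by
    intro t
    constructor
    · by_contra hcon
      push_neg at hcon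
      obtain ⟨ε, hε, hmono⟩ := aux_left f h hfcont hderiv a hfaneg
      set v := max (a - ε) (u t) with hv
      have hva : v < a := max_lt (by linarith) hcon
      have hvr : v ∈ Set.range u := by
        have : v ∈ Set.Icc (u t) (u t₀) :=
          ⟨le_max_right _ _, le_of_lt (lt_trans hva hac)⟩
        exact intermediate_value_univ t t₀ hu.continuous this
      obtain ⟨r, hr⟩ := hvr
      have h1 : h a < h v := hmono v ⟨le_max_left _ _, hva⟩
      rw [ha0] at h1
      have := hle r
      rw [hr] at this
      linarith
    · by_contra hcon
      push_neg at hcon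
      obtain ⟨ε, hε, hmono⟩ := aux_right f h hfcont hderiv b hfbpos
      set v := min (b + ε) (u t) with hv
      have hvb : b < v := lt_min (by linarith) hcon
      have hvr : v ∈ Set.range u := by
        have : v ∈ Set.Icc (u t₀) (u t) :=
          ⟨le_of_lt (lt_trans hcb hvb), min_le_right _ _⟩
        exact intermediate_value_univ t₀ t hu.continuous this
      obtain ⟨r, hr⟩ := hvr
      have h1 : h b < h v := hmono v ⟨hvb, min_le_left _ _⟩
      rw [hb0] at h1
      have := hle r
      rw [hr] at this
      linarith
  have hμab : μ ∈ Set.Icc a b := hμ ▸ himg 0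
  have hend : μ = a ∨ μ = b := by
    rcases eq_or_lt_of_le hμab.1 with heq | hlt
    · exact Or.inl heq.symm
    rcases eq_or_lt_of_le hμab.2 with heq | hlt2
    · exact Or.inr heq
    exact absurd hhμ (ne_of_lt (hneg μ ⟨hlt, hlt2⟩))
  exact ⟨a, b, hμab.1, hμab.2, ha0, hb0, hneg, himg, hend⟩
end
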